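/- arXiv:1005.3417 — 8 statements merged into one kernel-verified Lean document; each statement's English description precedes it below -/
import Mathlib

section
/- For x > 0, the function F(x) = ∫_0^∞ exp(-t - x t³) dt satisfies the inhomogeneous ODE 27x³ F''(x) + 54x² F'(x) + (6x + 1) F(x) = 1. -/
/-!
Writing `Mₙ(x) = ∫₀^∞ tⁿ e^{-t - x t³} dt`, differentiation under the integral sign gives
`Mₙ' = -Mₙ₊₃`, so `F = M₀`, `F' = -M₃`, `F'' = M₆`. Integrating `d/dt (tⁿ e^{-t - x t³})` over
`(0, ∞)` gives the recurrences `Rₙ : Mₙ + 3x Mₙ₊₂ = n Mₙ₋₁ + [n = 0]`, and the ODE is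
`R₀ - 6x R₁ - 3x R₂ + 9x² R₄`: its integrand `(27x³t⁶ - 54x²t³ + 6x + 1) e^{-t - x t³}` is the
derivative of `-(9x²t⁴ - 3xt² - 6xt + 1) e^{-t - x t³}`.
-/

open MeasureTheory Real Set Filter Topology

/-- `F(x) = ∫₀^∞ exp(-t - x t³) dt` -/
noncomputable def F3 (x : ℝ) : ℝ := ∫ t in Set.Ioi (0 : ℝ), Real.exp (-t - x * t ^ 3)

noncomputable def cubicMoment (n : ℕ) (x : ℝ) : ℝ :=
  ∫ t in Ioi (0 : ℝ), t ^ n * exp (-t - x * t ^ 3)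

lemma F3_eq_cubicMoment_zero : F3 = cubicMoment 0 := by
  funext x
  simp [F3, cubicMoment]

lemma integrableOn_pow_mul_exp_neg (n : ℕ) :
    IntegrableOn (fun t : ℝ => t ^ n * exp (-t)) (Ioi 0) := by
  refine (GammaIntegral_convergent (s := (n : ℝ) + 1) (by positivity)).congr_fun
    (fun t _ => ?_) measurableSet_Ioi
  simp only [add_sub_cancel_right, rpow_natCast, mul_comm]

lemma pow_mul_exp_cubic_le_pow_mul_exp (n : ℕ) {x t : ℝ} (hx : 0 ≤ x) (ht : 0 ≤ t) :
    t ^ n * exp (-t - x * t ^ 3) ≤ t ^ n * exp (-t) := by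
  gcongr
  nlinarith [pow_nonneg ht 3]

section

variable {x : ℝ}

lemma integrableOn_cubicMoment (n : ℕ) (hx : 0 ≤ x) :
    IntegrableOn (fun t : ℝ => t ^ n * exp (-t - x * t ^ 3)) (Ioi 0) := by
  refine (integrableOn_pow_mul_exp_neg n).mono' (by fun_prop) ?_
  filter_upwards [ae_restrict_mem measurableSet_Ioi] with t (ht : 0 < t)
  rw [norm_of_nonneg (by positivity)]
  exact pow_mul_exp_cubic_le_pow_mul_exp n hx ht.le

lemma hasDerivAt_cubicMoment (n : ℕ) (hx : 0 < x) :
    HasDerivAt (cubicMoment n) (-cubicMoment (n + 3) x) x := by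
  have hball : ∀ y ∈ Metric.ball x x, 0 ≤ y := fun y hy => by
    rw [Real.ball_eq_Ioo, sub_self] at hy
    exact hy.1.le
  have hderiv : ∀ t y, HasDerivAt (fun y => t ^ n * exp (-t - y * t ^ 3))
      (-(t ^ (n + 3) * exp (-t - y * t ^ 3))) y := fun t y => by
    have := (((hasDerivAt_id y).mul_const (t ^ 3)).const_sub (-t)).exp.const_mul (t ^ n)
    exact this.congr_deriv (by simp only [id]; ring)
  have key := hasDerivAt_integral_of_dominated_loc_of_deriv_le
    (μ := volume.restrict (Ioi 0)) (F := fun y t => t ^ n * exp (-t - y * t ^ 3))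
    (F' := fun y t => -(t ^ (n + 3) * exp (-t - y * t ^ 3)))
    (bound := fun t => t ^ (n + 3) * exp (-t))
    (Metric.ball_mem_nhds x hx) (.of_forall fun _ => by fun_prop)
    (integrableOn_cubicMoment n hx.le) (by fun_prop) ?_ (integrableOn_pow_mul_exp_neg (n + 3))
    (.of_forall fun t y _ => hderiv t y)
  · have hG := key.2
    rw [integral_neg] at hG
    exact hG
  · filter_upwards [ae_restrict_mem measurableSet_Ioi] with t (ht : 0 < t) y hy
    rw [norm_neg, norm_of_nonneg (by positivity)]
    exact pow_mul_exp_cubic_le_pow_mul_exp _ (hball y hy) ht.le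

/-- For `n = 0` the truncated `n - 1` is harmless, being multiplied by `n`; the boundary term
`0 ^ n` is then `1`. -/
lemma cubicMoment_recurrence (n : ℕ) (hx : 0 ≤ x) :
    cubicMoment n x + 3 * x * cubicMoment (n + 2) x = n * cubicMoment (n - 1) x + 0 ^ n := by
  set e : ℝ → ℝ := fun t => exp (-t - x * t ^ 3)
  have hderiv : ∀ t ∈ Ici (0 : ℝ), HasDerivAt (fun t => t ^ n * e t)
      (n * (t ^ (n - 1) * e t) - t ^ n * e t - 3 * x * (t ^ (n + 2) * e t)) t := fun t _ => by
    have := (hasDerivAt_pow n t).mul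
      (((hasDerivAt_id t).neg.sub ((hasDerivAt_pow 3 t).const_mul x)).exp)
    exact this.congr_deriv (by simp only [e, Pi.neg_apply, Pi.sub_apply, id]; push_cast; ring)
  have hint : ∀ k, IntegrableOn (fun t => t ^ k * e t) (Ioi 0) :=
    fun k => integrableOn_cubicMoment k hx
  have hlim : Tendsto (fun t => t ^ n * e t) atTop (𝓝 0) := by
    refine squeeze_zero' ?_ ?_ (tendsto_pow_mul_exp_neg_atTop_nhds_zero n)
    · filter_upwards [eventually_ge_atTop 0] with t ht using by positivity
    · filter_upwards [eventually_ge_atTop 0] with t ht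
      exact pow_mul_exp_cubic_le_pow_mul_exp n hx ht
  have hibp := integral_Ioi_of_hasDerivAt_of_tendsto' hderiv
    ((((hint _).const_mul _).sub (hint _)).sub ((hint _).const_mul _)) hlim
  rw [integral_sub, integral_sub, integral_const_mul, integral_const_mul] at hibp
  · have he0 : e 0 = 1 := by simp [e]
    rw [he0, zero_sub, mul_one] at hibp
    simp only [cubicMoment]
    linarith
  exacts [(hint _).const_mul _, hint _, ((hint _).const_mul _).sub (hint _), (hint _).const_mul _]

lemma cubicMoment_relation (hx : 0 ≤ x) :
    27 * x ^ 3 * cubicMoment 6 x - 54 * x ^ 2 * cubicMoment 3 x + (6 * x + 1) * cubicMoment 0 x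
      = 1 := by
  have r0 := cubicMoment_recurrence 0 hx
  have r1 := cubicMoment_recurrence 1 hx
  have r2 := cubicMoment_recurrence 2 hx
  have r4 := cubicMoment_recurrence 4 hx
  norm_num at r0 r1 r2 r4
  linear_combination r0 - 6 * x * r1 - 3 * x * r2 + 9 * x ^ 2 * r4

end

/-- For `x > 0`, `F(x) = ∫₀^∞ exp(-t - x t³) dt` satisfies
`27x³ F'' + 54x² F' + (6x+1) F = 1`. -/
theorem stmt3 (x : ℝ) (hx : 0 < x) :
    27 * x ^ 3 * deriv (deriv F3) x + 54 * x ^ 2 * deriv F3 x + (6 * x + 1) * F3 x = 1 := by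
  have hF' : deriv F3 =ᶠ[𝓝 x] fun y => -cubicMoment 3 y := by
    filter_upwards [isOpen_Ioi.mem_nhds hx] with y (hy : 0 < y)
    rw [F3_eq_cubicMoment_zero]
    exact (hasDerivAt_cubicMoment 0 hy).deriv
  have hF'' : deriv (deriv F3) x = cubicMoment 6 x := by
    rw [hF'.deriv_eq]
    exact (hasDerivAt_cubicMoment 3 hx).neg.deriv.trans (neg_neg _)
  rw [hF'', hF'.eq_of_nhds, F3_eq_cubicMoment_zero]
  linear_combination cubicMoment_relation hx.le
end

section
/- For x > 0 and real numbers 0 ≤ a ≤ b, the function A(x) = ∫_a^b exp(-t - x t³) dt satisfies 27x³ A''(x) + 54x² A'(x) + (6x+1) A(x) = -[(9x²t⁴ - 3xt² - 6xt + 1) exp(-t - x t³)]_{t=a}^{t=b}. -/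
/-- `A(x) = ∫_a^b exp(-t - x t³) dt` -/
noncomputable def A4 (a b x : ℝ) : ℝ := ∫ t in a..b, Real.exp (-t - x * t ^ 3)

/-- `g(t,x) = (9x²t⁴ - 3xt² - 6xt + 1)·exp(-t - x t³)` -/
noncomputable def g4 (t x : ℝ) : ℝ :=
  (9 * x ^ 2 * t ^ 4 - 3 * x * t ^ 2 - 6 * x * t + 1) * Real.exp (-t - x * t ^ 3)

/-!
Differentiating under the integral sign, `A'` and `A''` are the integrals of `-t³ e(t)` and
`t⁶ e(t)`, where `e(t) = exp(-t - x t³)`. Hence the left-hand side is the integral of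
`(27x³t⁶ - 54x²t³ + 6x + 1) e(t)`, and this integrand is exactly `-∂g/∂t`, so the fundamental
theorem of calculus evaluates it.
-/

open MeasureTheory Real

/-- The jointly continuous `F'` is bounded on `closedBall x₀ 1 × [a, b]`, and that constant
dominates the difference quotients. -/
theorem hasDerivAt_intervalIntegral_of_continuous {E : Type*} [NormedAddCommGroup E]
    [NormedSpace ℝ E] {F F' : ℝ → ℝ → E} (a b x₀ : ℝ) (hF : ∀ x, Continuous (F x))
    (hF' : Continuous (Function.uncurry F'))
    (hderiv : ∀ x t, HasDerivAt (fun x => F x t) (F' x t) x) :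
    HasDerivAt (fun x => ∫ t in a..b, F x t) (∫ t in a..b, F' x₀ t) x₀ := by
  obtain ⟨C, hC⟩ := ((isCompact_closedBall x₀ 1).prod (isCompact_uIcc (a := a) (b := b))
    ).exists_bound_of_continuousOn hF'.continuousOn
  refine (intervalIntegral.hasDerivAt_integral_of_dominated_loc_of_deriv_le (bound := fun _ => C)
    (Metric.closedBall_mem_nhds x₀ one_pos) (.of_forall fun x => (hF x).aestronglyMeasurable)
    ((hF x₀).intervalIntegrable a b) (hF'.uncurry_left x₀).aestronglyMeasurable ?_
    intervalIntegrable_const (.of_forall fun t _ x _ => hderiv x t)).2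
  exact .of_forall fun t ht x hx => hC (x, t) ⟨hx, Set.uIoc_subset_uIcc ht⟩

theorem hasDerivAt_integral_mul_exp_neg_sub_mul_cube {c : ℝ → ℝ} (hc : Continuous c)
    (a b x : ℝ) :
    HasDerivAt (fun y => ∫ t in a..b, c t * exp (-t - y * t ^ 3))
      (∫ t in a..b, c t * -t ^ 3 * exp (-t - x * t ^ 3)) x := by
  refine hasDerivAt_intervalIntegral_of_continuous (F := fun y t => c t * exp (-t - y * t ^ 3))
    (F' := fun y t => c t * -t ^ 3 * exp (-t - y * t ^ 3)) a b x (fun y => by fun_prop)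
    (by fun_prop) fun y t => ?_
  have hexp : HasDerivAt (fun y => -t - y * t ^ 3) (-t ^ 3) y := by
    simpa using ((hasDerivAt_id y).mul_const (t ^ 3)).const_sub (-t)
  simpa [mul_assoc, mul_comm] using hexp.exp.const_mul (c t)

theorem deriv_A4 (a b : ℝ) :
    deriv (A4 a b) = fun x => ∫ t in a..b, -t ^ 3 * exp (-t - x * t ^ 3) := by
  funext x
  unfold A4
  simpa only [one_mul] using
    (hasDerivAt_integral_mul_exp_neg_sub_mul_cube (c := fun _ => 1) continuous_const a b x).deriv

theorem deriv_deriv_A4 (a b x : ℝ) :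
    deriv (deriv (A4 a b)) x = ∫ t in a..b, t ^ 6 * exp (-t - x * t ^ 3) := by
  rw [deriv_A4, (hasDerivAt_integral_mul_exp_neg_sub_mul_cube (by fun_prop) a b x).deriv]
  congr with t
  ring

theorem hasDerivAt_g4 (t x : ℝ) :
    HasDerivAt (fun s => g4 s x)
      (-((27 * x ^ 3 * t ^ 6 - 54 * x ^ 2 * t ^ 3 + (6 * x + 1)) * exp (-t - x * t ^ 3))) t := by
  have hpoly : HasDerivAt (fun s : ℝ => 9 * x ^ 2 * s ^ 4 - 3 * x * s ^ 2 - 6 * x * s + 1)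
      (36 * x ^ 2 * t ^ 3 - 6 * x * t - 6 * x) t :=
    ((((hasDerivAt_pow 4 t).const_mul (9 * x ^ 2)).sub
      ((hasDerivAt_pow 2 t).const_mul (3 * x))).sub ((hasDerivAt_id t).const_mul (6 * x))).add_const
      1 |>.congr_deriv (by push_cast; ring)
  have hexp : HasDerivAt (fun s : ℝ => -s - x * s ^ 3) (-1 - 3 * x * t ^ 2) t :=
    (hasDerivAt_neg t).sub ((hasDerivAt_pow 3 t).const_mul x) |>.congr_deriv
      (by push_cast; ring)
  exact hpoly.mul hexp.exp |>.congr_deriv (by ring)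

theorem integral_eq_neg_sub_g4 (a b x : ℝ) :
    ∫ t in a..b, (27 * x ^ 3 * t ^ 6 - 54 * x ^ 2 * t ^ 3 + (6 * x + 1)) * exp (-t - x * t ^ 3)
      = -(g4 b x - g4 a x) := by
  rw [intervalIntegral.integral_eq_sub_of_hasDerivAt (f := fun s => -g4 s x)
    (fun t _ => by simpa only [neg_neg] using (hasDerivAt_g4 t x).fun_neg)
    (Continuous.intervalIntegrable (by fun_prop) a b)]
  ring

theorem stmt4_general (a b x : ℝ) :
    27 * x ^ 3 * deriv (deriv (A4 a b)) x + 54 * x ^ 2 * deriv (A4 a b) x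
      + (6 * x + 1) * A4 a b x = -(g4 b x - g4 a x) := by
  rw [deriv_deriv_A4, deriv_A4, A4, ← integral_eq_neg_sub_g4]
  have hsplit : ∀ t : ℝ,
      (27 * x ^ 3 * t ^ 6 - 54 * x ^ 2 * t ^ 3 + (6 * x + 1)) * exp (-t - x * t ^ 3)
        = 27 * x ^ 3 * (t ^ 6 * exp (-t - x * t ^ 3))
          + 54 * x ^ 2 * (-t ^ 3 * exp (-t - x * t ^ 3)) + (6 * x + 1) * exp (-t - x * t ^ 3) :=
    fun t => by ring
  simp_rw [hsplit]
  rw [intervalIntegral.integral_add, intervalIntegral.integral_add,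
    intervalIntegral.integral_const_mul, intervalIntegral.integral_const_mul,
    intervalIntegral.integral_const_mul]
  all_goals exact Continuous.intervalIntegrable (by fun_prop) a b

/-- For `x > 0` and `0 ≤ a ≤ b`, `A(x) = ∫_a^b exp(-t - x t³) dt` satisfies
`27x³ A'' + 54x² A' + (6x+1) A = -[g(t,x)]_{t=a}^{t=b}`. -/
theorem stmt4 (a b x : ℝ) (ha : 0 ≤ a) (hab : a ≤ b) (hx : 0 < x) :
    27 * x ^ 3 * deriv (deriv (A4 a b)) x + 54 * x ^ 2 * deriv (A4 a b) x
      + (6 * x + 1) * A4 a b x = -(g4 b x - g4 a x) :=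
  stmt4_general a b x
end

section
/- Let f(x,t) = t^{b-1}(1-t)^{c-b-1}(1-xt)^{-a}. Then Gauss's hypergeometric operator applied to f equals a total t-derivative of (t-1) f_x: (−x²+x) f_xx + ((−a−b−1)x + c) f_x − a b f = ∂_t( (t−1) f_x ), for 0 < t < 1 and xt < 1. -/
/-!
Both partial derivatives of `f` are rational multiples of `f` (logarithmic differentiation):
`f_x = a t / (1 - x t) · f` and `f_t = ((b-1)/t - (c-b-1)/(1-t) + a x/(1 - x t)) · f`.
Hence so are `f_xx` and `∂ₜ((t-1) f_x)`, and the identity reduces to one between rational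
functions of `x` and `t`.
-/

/-- `f(x,t) = t^(b-1) (1-t)^(c-b-1) (1-xt)^(-a)` (real powers). -/
noncomputable def f7 (a b c x t : ℝ) : ℝ :=
  t ^ (b - 1) * (1 - t) ^ (c - b - 1) * (1 - x * t) ^ (-a)

open Filter Topology

theorem HasDerivAt.rpow_const_of_ne_zero {f : ℝ → ℝ} {f' x : ℝ} (p : ℝ)
    (hf : HasDerivAt f f' x) (hx : f x ≠ 0) :
    HasDerivAt (fun y => f y ^ p) (p * f' / f x * f x ^ p) x := by
  convert hf.rpow_const (p := p) (Or.inl hx) using 1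
  rw [Real.rpow_sub_one hx]
  ring

section f7

variable (a b c : ℝ)

theorem hasDerivAt_f7_fst {x t : ℝ} (hxt : x * t ≠ 1) :
    HasDerivAt (fun z => f7 a b c z t) (a * t / (1 - x * t) * f7 a b c x t) x := by
  have hu : HasDerivAt (fun z => 1 - z * t) (-t) x := by
    simpa using ((hasDerivAt_id x).mul_const t).const_sub 1
  refine ((hu.rpow_const_of_ne_zero (-a) (sub_ne_zero.2 hxt.symm)).const_mul
    (t ^ (b - 1) * (1 - t) ^ (c - b - 1))).congr_deriv ?_
  simp only [f7]
  ring

theorem hasDerivAt_f7_snd {x t : ℝ} (ht0 : t ≠ 0) (ht1 : t ≠ 1) (hxt : x * t ≠ 1) :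
    HasDerivAt (fun s => f7 a b c x s)
      (((b - 1) / t - (c - b - 1) / (1 - t) + a * x / (1 - x * t)) * f7 a b c x t) t := by
  have h1 : HasDerivAt (fun s => 1 - s) (-1) t := by
    simpa using (hasDerivAt_id t).const_sub 1
  have hu : HasDerivAt (fun s => 1 - x * s) (-x) t := by
    simpa using ((hasDerivAt_id t).const_mul x).const_sub 1
  have h1t : 1 - t ≠ 0 := sub_ne_zero.2 ht1.symm
  have hu0 : 1 - x * t ≠ 0 := sub_ne_zero.2 hxt.symm
  refine ((((hasDerivAt_id' t).rpow_const_of_ne_zero (b - 1) ht0).mul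
    (h1.rpow_const_of_ne_zero (c - b - 1) h1t)).mul
    (hu.rpow_const_of_ne_zero (-a) hu0)).congr_deriv ?_
  simp only [f7, Pi.mul_apply]
  field_simp
  ring

theorem deriv_f7_fst_eventuallyEq {x t : ℝ} (hxt : x * t ≠ 1) :
    (fun y => deriv (fun z => f7 a b c z t) y) =ᶠ[𝓝 x]
      fun y => a * t / (1 - y * t) * f7 a b c y t := by
  have hopen : IsOpen {y : ℝ | y * t ≠ 1} := isOpen_ne_fun (by fun_prop) continuous_const
  filter_upwards [hopen.mem_nhds hxt] with y hy
  exact (hasDerivAt_f7_fst a b c hy).deriv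

theorem hasDerivAt_deriv_f7_fst {x t : ℝ} (hxt : x * t ≠ 1) :
    HasDerivAt (fun y => deriv (fun z => f7 a b c z t) y)
      (a * (a + 1) * t ^ 2 / (1 - x * t) ^ 2 * f7 a b c x t) x := by
  have hu0 : 1 - x * t ≠ 0 := sub_ne_zero.2 hxt.symm
  have hu : HasDerivAt (fun y => 1 - y * t) (-t) x := by
    simpa using ((hasDerivAt_id x).mul_const t).const_sub 1
  refine HasDerivAt.congr_of_eventuallyEq ?_ (deriv_f7_fst_eventuallyEq a b c hxt)
  refine (((hasDerivAt_const x (a * t)).div hu hu0).mul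
    (hasDerivAt_f7_fst a b c hxt)).congr_deriv ?_
  simp only [Pi.div_apply]
  field_simp
  ring

theorem hasDerivAt_sub_one_mul_deriv_f7_fst {x t : ℝ} (ht0 : t ≠ 0) (ht1 : t ≠ 1)
    (hxt : x * t ≠ 1) :
    HasDerivAt (fun s => (s - 1) * deriv (fun y => f7 a b c y s) x)
      (-a * (b * (1 - t) * (1 - x * t) - (c - b) * t * (1 - x * t) + (a + 1) * x * t * (1 - t))
        / (1 - x * t) ^ 2 * f7 a b c x t) t := by
  have hu0 : 1 - x * t ≠ 0 := sub_ne_zero.2 hxt.symm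
  have hu : HasDerivAt (fun s => 1 - x * s) (-x) t := by
    simpa using ((hasDerivAt_id t).const_mul x).const_sub 1
  have hopen : IsOpen {s : ℝ | x * s ≠ 1} := isOpen_ne_fun (by fun_prop) continuous_const
  have heq : (fun s => (s - 1) * deriv (fun y => f7 a b c y s) x) =ᶠ[𝓝 t]
      fun s => (s - 1) * (a * s) / (1 - x * s) * f7 a b c x s := by
    filter_upwards [hopen.mem_nhds hxt] with s hs
    rw [(hasDerivAt_f7_fst a b c hs).deriv]
    ring
  refine HasDerivAt.congr_of_eventuallyEq ?_ heq
  refine (((((hasDerivAt_id' t).sub_const 1).mul ((hasDerivAt_id' t).const_mul a)).div hu hu0).mul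
    (hasDerivAt_f7_snd a b c ht0 ht1 hxt)).congr_deriv ?_
  have h1t : 1 - t ≠ 0 := sub_ne_zero.2 ht1.symm
  -- `field_simp` normalizes `1 - x * t` to `1 - t * x` here
  have hu0' : 1 - t * x ≠ 0 := by rwa [mul_comm]
  simp only [Pi.mul_apply, Pi.div_apply]
  field_simp
  ring

end f7

/-- Gauss's hypergeometric operator applied to `f` equals the total `t`-derivative
of `(t-1) f_x`:
`(−x²+x) f_xx + ((−a−b−1)x + c) f_x − ab f = ∂ₜ((t−1) f_x)` on `0 < t < 1`, `xt < 1`. -/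
theorem stmt7 (a b c x t : ℝ) (ht0 : 0 < t) (ht1 : t < 1) (hxt : x * t < 1) :
    (-x ^ 2 + x) * deriv (fun y => deriv (fun z => f7 a b c z t) y) x
      + ((-a - b - 1) * x + c) * deriv (fun y => f7 a b c y t) x
      - a * b * f7 a b c x t
      = deriv (fun s => (s - 1) * deriv (fun y => f7 a b c y s) x) t := by
  rw [(hasDerivAt_deriv_f7_fst a b c hxt.ne).deriv, (hasDerivAt_f7_fst a b c hxt.ne).deriv,
    (hasDerivAt_sub_one_mul_deriv_f7_fst a b c ht0.ne' ht1.ne hxt.ne).deriv]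
  have hu0 : 1 - x * t ≠ 0 := by linarith
  field_simp
  ring
end

section
/- Let 0 < p < q < 1 and |x| < 1, and let F(x) = ∫_p^q t^{b-1}(1-t)^{c-b-1}(1-xt)^{-a} dt. Then F satisfies the inhomogeneous Gauss hypergeometric equation (−x²+x) F''(x) + ((−a−b−1)x + c) F'(x) − a b F(x) = [ (t−1) ∂_x f(x,t) ]_{t=p}^{t=q}, where f is the integrand. -/
/-- The integrand `f(x,t) = t^(b-1) (1-t)^(c-b-1) (1-xt)^(-a)` (real powers). -/
noncomputable def f8 (a b c x t : ℝ) : ℝ :=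
  t ^ (b - 1) * (1 - t) ^ (c - b - 1) * (1 - x * t) ^ (-a)

/-- `F(x) = ∫_p^q t^(b-1) (1-t)^(c-b-1) (1-xt)^(-a) dt`. -/
noncomputable def F8 (a b c p q x : ℝ) : ℝ := ∫ t in p..q, f8 a b c x t

/-!
Differentiating under the integral sign twice, the left-hand side is the integral over `[p, q]`
of `(x - x²) ∂ₓ²f + ((-a - b - 1) x + c) ∂ₓf - a b f`. This combination is exactly
`∂ₜ((t - 1) ∂ₓf)`, the identity behind Euler's integral representation of `₂F₁`, so the
fundamental theorem of calculus leaves only the boundary terms.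
-/

open MeasureTheory Set Metric Filter Function
open scoped Interval Topology

theorem hasDerivAt_intervalIntegral_of_continuousOn {E : Type*} [NormedAddCommGroup E]
    [NormedSpace ℝ E] {f f' : ℝ → ℝ → E} {U : Set ℝ} {p q x : ℝ} (hU : IsOpen U) (hx : x ∈ U)
    (hf : ContinuousOn (uncurry f) (U ×ˢ [[p, q]]))
    (hf' : ContinuousOn (uncurry f') (U ×ˢ [[p, q]]))
    (hderiv : ∀ y ∈ U, ∀ t ∈ [[p, q]], HasDerivAt (f · t) (f' y t) y) :
    HasDerivAt (fun y => ∫ t in p..q, f y t) (∫ t in p..q, f' x t) x := by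
  have slice {g : ℝ → ℝ → E} (hg : ContinuousOn (uncurry g) (U ×ˢ [[p, q]])) {y : ℝ}
      (hy : y ∈ U) : ContinuousOn (g y) [[p, q]] :=
    hg.comp (Continuous.prodMk_right y).continuousOn fun t ht => ⟨hy, ht⟩
  have aesm {g : ℝ → ℝ → E} (hg : ContinuousOn (uncurry g) (U ×ˢ [[p, q]])) {y : ℝ}
      (hy : y ∈ U) : AEStronglyMeasurable (g y) (volume.restrict (Ι p q)) :=
    ((slice hg hy).mono uIoc_subset_uIcc).aestronglyMeasurable measurableSet_uIoc
  obtain ⟨ε, hε, hball⟩ := nhds_basis_closedBall.mem_iff.mp (hU.mem_nhds hx)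
  obtain ⟨C, hC⟩ := ((isCompact_closedBall x ε).prod isCompact_uIcc).exists_bound_of_continuousOn
    (hf'.mono (prod_mono hball le_rfl))
  refine (intervalIntegral.hasDerivAt_integral_of_dominated_loc_of_deriv_le (ball_mem_nhds x hε)
    ?_ (slice hf hx).intervalIntegrable (aesm hf' hx) ?_ (intervalIntegrable_const (c := C))
    ?_).2
  · filter_upwards [hU.mem_nhds hx] with y hy using aesm hf hy
  · exact Eventually.of_forall fun t ht y hy =>
      hC (y, t) ⟨ball_subset_closedBall hy, uIoc_subset_uIcc ht⟩
  · exact Eventually.of_forall fun t ht y hy =>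
      hderiv y (hball (ball_subset_closedBall hy)) t (uIoc_subset_uIcc ht)

/-- `∂ₓⁿ (1 - x t)^(-a)`. -/
noncomputable def kernelIterDeriv (a : ℝ) (n : ℕ) (x t : ℝ) : ℝ :=
  (ascPochhammer ℝ n).eval a * t ^ n * (1 - x * t) ^ (-a - n)

theorem hasDerivAt_kernelIterDeriv (a : ℝ) (n : ℕ) {x t : ℝ} (h : 0 < 1 - x * t) :
    HasDerivAt (kernelIterDeriv a n · t) (kernelIterDeriv a (n + 1) x t) x := by
  have hlin : HasDerivAt (fun y : ℝ => 1 - y * t) (-t) x := by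
    simpa using ((hasDerivAt_id x).mul_const t).const_sub 1
  refine ((hlin.rpow_const (p := -a - n) (Or.inl h.ne')).const_mul _).congr_deriv ?_
  rw [kernelIterDeriv, ascPochhammer_succ_eval, Nat.cast_succ, ← sub_sub]
  ring

noncomputable def integrandIterDeriv (a b c : ℝ) (n : ℕ) (x t : ℝ) : ℝ :=
  t ^ (b - 1) * (1 - t) ^ (c - b - 1) * kernelIterDeriv a n x t

theorem integrandIterDeriv_zero (a b c : ℝ) : integrandIterDeriv a b c 0 = f8 a b c := by
  ext x t
  simp [integrandIterDeriv, kernelIterDeriv, f8]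

theorem hasDerivAt_integrandIterDeriv (a b c : ℝ) (n : ℕ) {x t : ℝ} (h : 0 < 1 - x * t) :
    HasDerivAt (integrandIterDeriv a b c n · t) (integrandIterDeriv a b c (n + 1) x t) x :=
  (hasDerivAt_kernelIterDeriv a n h).const_mul _

theorem one_sub_mul_pos_of_abs_lt_one {x t : ℝ} (hx : |x| < 1) (ht : t ∈ Ioo (0 : ℝ) 1) :
    0 < 1 - x * t := by
  have : |x * t| < 1 := by
    rw [abs_mul, abs_of_pos ht.1]
    nlinarith [abs_nonneg x, ht.1, ht.2]
  linarith [le_abs_self (x * t)]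

theorem continuousOn_integrandIterDeriv (a b c : ℝ) (n : ℕ) :
    ContinuousOn (uncurry (integrandIterDeriv a b c n)) (ball 0 1 ×ˢ Ioo 0 1) := by
  rintro ⟨x, t⟩ ⟨hx, ht⟩
  rw [mem_ball_zero_iff, Real.norm_eq_abs] at hx
  dsimp only at hx ht
  have h0 : t ≠ 0 := ht.1.ne'
  have h1 : 1 - t ≠ 0 := (sub_pos.2 ht.2).ne'
  have h2 : 1 - x * t ≠ 0 := (one_sub_mul_pos_of_abs_lt_one hx ht).ne'
  apply ContinuousAt.continuousWithinAt
  show ContinuousAt (fun z : ℝ × ℝ => z.2 ^ (b - 1) * (1 - z.2) ^ (c - b - 1) *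
    ((ascPochhammer ℝ n).eval a * z.2 ^ n * (1 - z.1 * z.2) ^ (-a - n))) (x, t)
  fun_prop (disch := exact Or.inl (by assumption))

theorem continuousOn_integrandIterDeriv_right (a b c : ℝ) (n : ℕ) {x : ℝ} (hx : |x| < 1) :
    ContinuousOn (integrandIterDeriv a b c n x) (Ioo 0 1) :=
  (continuousOn_integrandIterDeriv a b c n).comp (Continuous.prodMk_right x).continuousOn
    fun _ ht => ⟨by simpa using hx, ht⟩

theorem hasDerivAt_integral_integrandIterDeriv (a b c : ℝ) (n : ℕ) {p q x : ℝ}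
    (hpq : [[p, q]] ⊆ Ioo 0 1) (hx : |x| < 1) :
    HasDerivAt (fun y => ∫ t in p..q, integrandIterDeriv a b c n y t)
      (∫ t in p..q, integrandIterDeriv a b c (n + 1) x t) x := by
  have hcont (m : ℕ) := (continuousOn_integrandIterDeriv a b c m).mono (prod_mono le_rfl hpq)
  refine hasDerivAt_intervalIntegral_of_continuousOn isOpen_ball (by simpa using hx)
    (hcont n) (hcont (n + 1)) fun y hy t ht => hasDerivAt_integrandIterDeriv a b c n ?_
  rw [mem_ball_zero_iff, Real.norm_eq_abs] at hy
  exact one_sub_mul_pos_of_abs_lt_one hy (hpq ht)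

theorem hasDerivAt_sub_one_mul_integrandIterDeriv_one (a b c x : ℝ) {t : ℝ}
    (ht : t ∈ Ioo (0 : ℝ) 1) (hxt : 0 < 1 - x * t) :
    HasDerivAt (fun s => (s - 1) * integrandIterDeriv a b c 1 x s)
      ((-x ^ 2 + x) * integrandIterDeriv a b c 2 x t
        + ((-a - b - 1) * x + c) * integrandIterDeriv a b c 1 x t
        - a * b * integrandIterDeriv a b c 0 x t) t := by
  have ht0 : t ≠ 0 := ht.1.ne'
  have h1t : 0 < 1 - t := sub_pos.2 ht.2
  have hP := (hasDerivAt_id' t).rpow_const (p := b - 1) (Or.inl ht0)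
  have hQ := ((hasDerivAt_id' t).const_sub 1).rpow_const (p := c - b - 1) (Or.inl h1t.ne')
  have hR := (((hasDerivAt_id' t).const_mul x).const_sub 1).rpow_const (p := -a - 1)
    (Or.inl hxt.ne')
  have hfun : (fun s => (s - 1) * integrandIterDeriv a b c 1 x s) = fun s =>
      (s - 1) * (s ^ (b - 1) * (1 - s) ^ (c - b - 1) * (a * s * (1 - x * s) ^ (-a - 1))) := by
    ext s
    simp [integrandIterDeriv, kernelIterDeriv]
  rw [hfun]
  refine (((hasDerivAt_id' t).sub_const 1).mul
    ((hP.mul hQ).mul (((hasDerivAt_id' t).const_mul a).mul hR))).congr_deriv ?_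
  -- Factor out `t^(b-1) (1-t)^(c-b-1) (1-xt)^(-a-2)`: what remains is a polynomial identity.
  have e1 : t ^ (b - 1 - 1) = t ^ (b - 1) / t := Real.rpow_sub_one ht0 _
  have e2 : (1 - t) ^ (c - b - 1 - 1) = (1 - t) ^ (c - b - 1) / (1 - t) :=
    Real.rpow_sub_one h1t.ne' _
  have e3 : (1 - x * t) ^ (-a - 1 - 1) = (1 - x * t) ^ (-a - 2) := by ring_nf
  have e4 : (1 - x * t) ^ (-a - 1) = (1 - x * t) ^ (-a - 2) * (1 - x * t) := by
    rw [← e3, Real.rpow_sub_one hxt.ne' (-a - 1)]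
    field_simp
  have e5 : (1 - x * t) ^ (-a) = (1 - x * t) ^ (-a - 2) * (1 - x * t) ^ 2 := by
    rw [← Real.rpow_two, ← Real.rpow_add hxt]
    ring_nf
  simp only [integrandIterDeriv, kernelIterDeriv, ascPochhammer_succ_eval, ascPochhammer_one,
    ascPochhammer_zero, Polynomial.eval_X, Polynomial.eval_one, Nat.cast_one, Nat.cast_ofNat,
    CharP.cast_eq_zero, pow_zero, pow_one, sub_zero, Pi.mul_apply, e1, e2, e3, e4, e5]
  field_simp
  ring

theorem hypergeometricCombination_integral_eq_sub (a b c : ℝ) {p q x : ℝ}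
    (hpq : [[p, q]] ⊆ Ioo 0 1) (hx : |x| < 1) :
    (-x ^ 2 + x) * (∫ t in p..q, integrandIterDeriv a b c 2 x t)
      + ((-a - b - 1) * x + c) * (∫ t in p..q, integrandIterDeriv a b c 1 x t)
      - a * b * (∫ t in p..q, integrandIterDeriv a b c 0 x t)
      = (q - 1) * integrandIterDeriv a b c 1 x q - (p - 1) * integrandIterDeriv a b c 1 x p := by
  have hint (n : ℕ) : IntervalIntegrable (integrandIterDeriv a b c n x) volume p q :=
    ((continuousOn_integrandIterDeriv_right a b c n hx).mono hpq).intervalIntegrable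
  have h2 := (hint 2).const_mul (-x ^ 2 + x)
  have h1 := (hint 1).const_mul ((-a - b - 1) * x + c)
  have h0 := (hint 0).const_mul (a * b)
  rw [← intervalIntegral.integral_const_mul, ← intervalIntegral.integral_const_mul,
    ← intervalIntegral.integral_const_mul, ← intervalIntegral.integral_add h2 h1,
    ← intervalIntegral.integral_sub (h2.add h1) h0]
  exact intervalIntegral.integral_eq_sub_of_hasDerivAt
    (fun t ht => hasDerivAt_sub_one_mul_integrandIterDeriv_one a b c x (hpq ht)
      (one_sub_mul_pos_of_abs_lt_one hx (hpq ht))) ((h2.add h1).sub h0)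

/-- For `0 < p < q < 1` and `|x| < 1`, `F` satisfies the inhomogeneous Gauss
hypergeometric equation
`(−x²+x) F'' + ((−a−b−1)x + c) F' − ab F = [(t−1) ∂ₓ f(x,t)]_{t=p}^{t=q}`. -/
theorem stmt8 (a b c p q x : ℝ) (hp : 0 < p) (hpq : p < q) (hq : q < 1) (hx : |x| < 1) :
    (-x ^ 2 + x) * deriv (deriv (F8 a b c p q)) x
      + ((-a - b - 1) * x + c) * deriv (F8 a b c p q) x
      - a * b * F8 a b c p q x
      = (q - 1) * deriv (fun y => f8 a b c y q) x
        - (p - 1) * deriv (fun y => f8 a b c y p) x := by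
  have hpq01 : [[p, q]] ⊆ Ioo 0 1 := by
    rw [uIcc_of_le hpq.le]
    exact Icc_subset_Ioo hp hq
  set g := integrandIterDeriv a b c
  have hF : F8 a b c p q = fun y => ∫ t in p..q, g 0 y t := by
    ext y; simp only [g, F8, integrandIterDeriv_zero]
  have hF' : deriv (F8 a b c p q) =ᶠ[𝓝 x] fun y => ∫ t in p..q, g 1 y t := by
    filter_upwards [isOpen_lt continuous_abs continuous_const |>.mem_nhds hx] with y hy
    rw [hF]
    exact (hasDerivAt_integral_integrandIterDeriv a b c 0 hpq01 hy).deriv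
  have hF'' : deriv (deriv (F8 a b c p q)) x = ∫ t in p..q, g 2 x t := by
    rw [hF'.deriv_eq]
    exact (hasDerivAt_integral_integrandIterDeriv a b c 1 hpq01 hx).deriv
  have hf' {t : ℝ} (ht : t ∈ [[p, q]]) : deriv (fun y => f8 a b c y t) x = g 1 x t := by
    rw [← integrandIterDeriv_zero]
    exact (hasDerivAt_integrandIterDeriv a b c 0
      (one_sub_mul_pos_of_abs_lt_one hx (hpq01 ht))).deriv
  rw [hF'', hF'.eq_of_nhds, hF, hf' left_mem_uIcc, hf' right_mem_uIcc]
  exact hypergeometricCombination_integral_eq_sub a b c hpq01 hx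
end

section
/- Suppose f : ℝⁿ → ℝ is smooth and P ∈ D' annihilates-modulo-derivatives: P = P₀ + ∑_{i=1}^m ∂ᵢ Pᵢ with P₀·f = 0. If for each i ≤ m the function (Pᵢ·f) vanishes on the boundary faces xᵢ = aᵢ and xᵢ = bᵢ of the box R = ∏[aᵢ,bᵢ] (for the remaining variables fixed), then the function A(x_{m+1},…,xₙ) = ∫_R f dx₁⋯dx_m satisfies P·A = 0. -/
open MeasureTheory

/-- Let `f(s, y)` be smooth (`s ∈ ℝᵐ` the integration variables, `y ∈ ℝᵏ` the
remaining variables), let `L` be the operator `P ∈ D'` acting in the `y`-variables,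
and let `u i = Pᵢ · f`.  Suppose `P · f = ∑ᵢ ∂_{sᵢ}(u i)` (i.e. `P₀ · f = 0` where
`P = P₀ + ∑ ∂ᵢ Pᵢ`), each `u i` vanishes on the boundary faces `sᵢ = aᵢ` and
`sᵢ = bᵢ` of the box `R = ∏ [aᵢ, bᵢ]`, and differentiation under the integral sign
is valid (`L A y = ∫_R (P·f)(s,y) ds`).  Then `A(y) = ∫_R f(s,y) ds` satisfies
`P · A = 0`. -/
theorem stmt12 (m k : ℕ) (a b : Fin m → ℝ) (hab : a ≤ b)
    (f : (Fin m → ℝ) × (Fin k → ℝ) → ℝ) (hf : ContDiff ℝ (⊤ : ℕ∞) f)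
    (u : Fin m → ((Fin m → ℝ) × (Fin k → ℝ) → ℝ)) (hu : ∀ i, ContDiff ℝ (⊤ : ℕ∞) (u i))
    (L : ((Fin k → ℝ) → ℝ) →ₗ[ℝ] ((Fin k → ℝ) → ℝ))
    (hPf : ∀ (s : Fin m → ℝ) (y : Fin k → ℝ),
      L (fun y' => f (s, y')) y
        = ∑ i : Fin m, deriv (fun r => u i (Function.update s i r, y)) (s i))
    (hbd : ∀ i : Fin m, ∀ s ∈ Set.Icc a b, ∀ y : Fin k → ℝ,
      u i (Function.update s i (a i), y) = 0 ∧ u i (Function.update s i (b i), y) = 0)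
    (A : (Fin k → ℝ) → ℝ)
    (hA : ∀ y, A y = ∫ s in Set.Icc a b, f (s, y))
    (hswap : ∀ y, L A y = ∫ s in Set.Icc a b, L (fun y' => f (s, y')) y) :
    ∀ y, L A y = 0 := by
  intro y
  rw [hswap y]
  cases m with
  | zero =>
      simp_rw [hPf]
      simp
  | succ n =>
      set g : Fin (n + 1) → (Fin (n + 1) → ℝ) → ℝ := fun i s => u i (s, y) with hg_def
      have hgc : ∀ i, ContDiff ℝ (⊤ : ℕ∞) (g i) := fun i =>
        (hu i).comp (contDiff_id.prodMk contDiff_const)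
      have hgd : ∀ i (s : Fin (n + 1) → ℝ), HasFDerivAt (g i) (fderiv ℝ (g i) s) s :=
        fun i s => ((hgc i).differentiable (by simp) s).hasFDerivAt
      have key : ∀ s : Fin (n + 1) → ℝ,
          L (fun y' => f (s, y')) y = ∑ i, fderiv ℝ (g i) s (Pi.single i 1) := by
        intro s
        rw [hPf]
        refine Finset.sum_congr rfl fun i _ => ?_
        have hup : Function.update s i (s i) = s := Function.update_eq_self i s
        have h1 := (hgd i (Function.update s i (s i))).comp_hasDerivAt (s i)
          (hasDerivAt_update s i (s i))
        rw [hup] at h1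
        exact h1.deriv
      have hIcont : Continuous fun s => ∑ i, fderiv ℝ (g i) s (Pi.single i 1) := by
        refine continuous_finset_sum _ fun i _ => ?_
        exact ((hgc i).continuous_fderiv (by simp)).clm_apply continuous_const
      calc
        ∫ s in Set.Icc a b, L (fun y' => f (s, y')) y
            = ∫ s in Set.Icc a b, ∑ i, fderiv ℝ (g i) s (Pi.single i 1) := by
              simp_rw [key]
        _ = ∑ i : Fin (n + 1),
              ((∫ x in Set.Icc (a ∘ i.succAbove) (b ∘ i.succAbove),
                  g i (i.insertNth (b i) x)) -
                ∫ x in Set.Icc (a ∘ i.succAbove) (b ∘ i.succAbove),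
                  g i (i.insertNth (a i) x)) := by
              exact integral_divergence_of_hasFDerivAt_off_countable' a b hab g
                (fun i s => fderiv ℝ (g i) s) ∅ Set.countable_empty
                (fun i => (hgc i).continuous.continuousOn)
                (fun x _ i => hgd i x)
                (hIcont.continuousOn.integrableOn_compact isCompact_Icc)
        _ = 0 := by
              refine Finset.sum_eq_zero fun i _ => ?_
              have hface : ∀ (c : ℝ), c ∈ Set.Icc (a i) (b i) →
                  (∫ x in Set.Icc (a ∘ i.succAbove) (b ∘ i.succAbove),
                    g i (i.insertNth c x)) = 0 → True := fun _ _ _ => trivial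
              have h0 : ∀ (c : ℝ), c ∈ Set.Icc (a i) (b i) →
                  (∀ s ∈ Set.Icc a b, u i (Function.update s i c, y) = 0) →
                  (∫ x in Set.Icc (a ∘ i.succAbove) (b ∘ i.succAbove),
                    g i (i.insertNth c x)) = 0 := by
                intro c hc hz
                refine setIntegral_eq_zero_of_forall_eq_zero fun x hx => ?_
                have hmem : i.insertNth c x ∈ Set.Icc a b :=
                  Fin.insertNth_mem_Icc.2 ⟨hc, hx⟩
                have := hz _ hmem
                have heq : Function.update (i.insertNth c x) i c = (i.insertNth c x : Fin (n+1) → ℝ) := by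
                  rw [Function.update_eq_self_iff, Fin.insertNth_apply_same]
                rwa [heq] at this
              have hbi : ∀ s ∈ Set.Icc a b, u i (Function.update s i (b i), y) = 0 :=
                fun s hs => (hbd i s hs y).2
              have hai : ∀ s ∈ Set.Icc a b, u i (Function.update s i (a i), y) = 0 :=
                fun s hs => (hbd i s hs y).1
              rw [h0 (b i) ⟨hab i, le_rfl⟩ hbi, h0 (a i) ⟨le_rfl, hab i⟩ hai, sub_self]
end

section
/- In the Weyl algebra ℚ⟨t, x, ∂_t, ∂_x⟩, the element (−x²+x)∂_x² + ((−a−b−1)x + c)∂_x − ab − ∂_t(t−1)∂_x lies in the left ideal generated by (−x²+x)∂_x² + ((−t+1)∂_t + (−a−b−1)x + c − 1)∂_x − ab, (−t+1)x∂_x + (t²−t)∂_t + (−c+2)t + b − 1, and (tx−1)∂_x + at, where a, b, c are central parameters. -/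
/-! Since `∂ₜ (t − 1) = (t − 1) ∂ₜ + 1`, the given element is the first generator of the ideal
itself. -/

/-- The field `ℚ(a,b,c)` of rational functions in the parameters `a`, `b`, `c`. -/
abbrev K15 := FractionRing (MvPolynomial (Fin 3) ℚ)

/-- Defining relations of the Weyl algebra `K15⟨t, x, ∂ₜ, ∂ₓ⟩`: generator `0` is `t`,
`1` is `x`, `2` is `∂ₜ`, `3` is `∂ₓ`; the relations are `∂ₜ t = t ∂ₜ + 1`,
`∂ₓ x = x ∂ₓ + 1`, and all other pairs of generators commute. -/
inductive W15Rel : FreeAlgebra K15 (Fin 4) → FreeAlgebra K15 (Fin 4) → Prop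
  | dt_t : W15Rel (FreeAlgebra.ι K15 2 * FreeAlgebra.ι K15 0)
      (FreeAlgebra.ι K15 0 * FreeAlgebra.ι K15 2 + 1)
  | dx_x : W15Rel (FreeAlgebra.ι K15 3 * FreeAlgebra.ι K15 1)
      (FreeAlgebra.ι K15 1 * FreeAlgebra.ι K15 3 + 1)
  | comm (i j : Fin 4)
      (h : ¬((i = 2 ∧ j = 0) ∨ (i = 0 ∧ j = 2) ∨ (i = 3 ∧ j = 1) ∨ (i = 1 ∧ j = 3))) :
      W15Rel (FreeAlgebra.ι K15 i * FreeAlgebra.ι K15 j)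
        (FreeAlgebra.ι K15 j * FreeAlgebra.ι K15 i)

/-- The Weyl algebra `ℚ(a,b,c)⟨t, x, ∂ₜ, ∂ₓ⟩`. -/
abbrev W15 := RingQuot W15Rel

noncomputable def w15t : W15 := RingQuot.mkAlgHom K15 W15Rel (FreeAlgebra.ι K15 0)
noncomputable def w15x : W15 := RingQuot.mkAlgHom K15 W15Rel (FreeAlgebra.ι K15 1)
noncomputable def w15dt : W15 := RingQuot.mkAlgHom K15 W15Rel (FreeAlgebra.ι K15 2)
noncomputable def w15dx : W15 := RingQuot.mkAlgHom K15 W15Rel (FreeAlgebra.ι K15 3)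

/-- The central parameter `a` in the Weyl algebra. -/
noncomputable def ca : W15 :=
  algebraMap K15 W15 (algebraMap (MvPolynomial (Fin 3) ℚ) K15 (MvPolynomial.X 0))
/-- The central parameter `b`. -/
noncomputable def cb : W15 :=
  algebraMap K15 W15 (algebraMap (MvPolynomial (Fin 3) ℚ) K15 (MvPolynomial.X 1))
/-- The central parameter `c`. -/
noncomputable def cc : W15 :=
  algebraMap K15 W15 (algebraMap (MvPolynomial (Fin 3) ℚ) K15 (MvPolynomial.X 2))

lemma eq_first_generator_of_mul_eq_add_one {R : Type*} [Ring R] {t dt : R} (h : dt * t = t * dt + 1)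
    (x dx a b c : R) :
    (-x ^ 2 + x) * dx ^ 2 + ((-a - b - 1) * x + c) * dx - a * b - dt * (t - 1) * dx
      = (-x ^ 2 + x) * dx ^ 2 + ((-t + 1) * dt + (-a - b - 1) * x + c - 1) * dx - a * b := by
  rw [mul_sub, mul_one, h]
  noncomm_ring

lemma w15dt_mul_w15t : w15dt * w15t = w15t * w15dt + 1 := by
  simpa only [w15dt, w15t, map_mul, map_add, map_one] using RingQuot.mkAlgHom_rel K15 W15Rel.dt_t

/-- In the Weyl algebra `ℚ(a,b,c)⟨t, x, ∂ₜ, ∂ₓ⟩`, the element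
`(−x²+x)∂ₓ² + ((−a−b−1)x + c)∂ₓ − ab − ∂ₜ(t−1)∂ₓ` lies in the left ideal generated by
`(−x²+x)∂ₓ² + ((−t+1)∂ₜ + (−a−b−1)x + c − 1)∂ₓ − ab`,
`(−t+1)x∂ₓ + (t²−t)∂ₜ + (−c+2)t + b − 1` and `(tx−1)∂ₓ + at`. -/
theorem stmt15 :
    ∃ a₁ a₂ a₃ : W15,
      (-w15x ^ 2 + w15x) * w15dx ^ 2 + ((-ca - cb - 1) * w15x + cc) * w15dx
          - ca * cb - w15dt * (w15t - 1) * w15dx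
        = a₁ * ((-w15x ^ 2 + w15x) * w15dx ^ 2
              + ((-w15t + 1) * w15dt + (-ca - cb - 1) * w15x + cc - 1) * w15dx - ca * cb)
          + a₂ * ((-w15t + 1) * w15x * w15dx + (w15t ^ 2 - w15t) * w15dt
              + (-cc + 2) * w15t + cb - 1)
          + a₃ * ((w15t * w15x - 1) * w15dx + ca * w15t) := by
  refine ⟨1, 0, 0, ?_⟩
  rw [one_mul, zero_mul, zero_mul, add_zero, add_zero]
  exact eq_first_generator_of_mul_eq_add_one w15dt_mul_w15t w15x w15dx ca cb cc
end

section
/- The function f(t,x) = exp((-t³ + t)x) satisfies the operator identity (−27x²∂_x² − 27x∂_x + 4x² + 3)·f = ∂_t( (−9tx∂_x + (−6t² + 4)x + 3t)·f ). -/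
/-!
Since `f = exp (p(t) x)` with `p(t) = t - t³`, each `x`-derivative multiplies `f` by `p(t)`,
so both sides are polynomials in `t, x` times `f`, and the identity becomes a polynomial identity.
-/

/-- `f(t,x) = exp((-t³ + t)x)` -/
noncomputable def f17 (t x : ℝ) : ℝ := Real.exp ((-t ^ 3 + t) * x)
noncomputable def f17x (t x : ℝ) : ℝ := deriv (fun y => f17 t y) x
noncomputable def f17xx (t x : ℝ) : ℝ := deriv (fun y => f17x t y) x

theorem iteratedDeriv_f17 (n : ℕ) (t : ℝ) :
    iteratedDeriv n (f17 t) = fun x => (-t ^ 3 + t) ^ n * f17 t x :=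
  iteratedDeriv_exp_const_mul n _

theorem f17x_eq (t x : ℝ) : f17x t x = (-t ^ 3 + t) * f17 t x := by
  have h := congrFun (iteratedDeriv_f17 1 t) x
  rwa [iteratedDeriv_one, pow_one] at h

theorem f17xx_eq (t x : ℝ) : f17xx t x = (-t ^ 3 + t) ^ 2 * f17 t x := by
  have h : f17x t = iteratedDeriv 1 (f17 t) := by
    rw [iteratedDeriv_one]; rfl
  rw [f17xx, h, ← iteratedDeriv_succ, iteratedDeriv_f17]

/-- `(−27x²∂ₓ² − 27x∂ₓ + 4x² + 3)·f = ∂ₜ((−9tx∂ₓ + (−6t² + 4)x + 3t)·f)`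
for `f(t,x) = exp((-t³+t)x)`. -/
theorem stmt17 (t x : ℝ) :
    -27 * x ^ 2 * f17xx t x - 27 * x * f17x t x + (4 * x ^ 2 + 3) * f17 t x
      = deriv (fun s => -9 * s * x * f17x s x + ((-6 * s ^ 2 + 4) * x + 3 * s) * f17 s x) t := by
  have hrhs : (fun s => -9 * s * x * f17x s x + ((-6 * s ^ 2 + 4) * x + 3 * s) * f17 s x)
      = fun s =>
        (9 * x * s ^ 4 - 15 * x * s ^ 2 + 4 * x + 3 * s) * Real.exp ((-s ^ 3 + s) * x) := by
    funext s
    rw [f17x_eq, f17]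
    ring
  have hp : HasDerivAt (fun s : ℝ => -s ^ 3 + s) (-3 * t ^ 2 + 1) t :=
    ((hasDerivAt_pow 3 t).neg.add (hasDerivAt_id' t)).congr_deriv (by ring)
  have hq : HasDerivAt (fun s : ℝ => 9 * x * s ^ 4 - 15 * x * s ^ 2 + 4 * x + 3 * s)
      (36 * t ^ 3 * x - 30 * t * x + 3) t :=
    ((((hasDerivAt_pow 4 t).const_mul (9 * x)).sub
      ((hasDerivAt_pow 2 t).const_mul (15 * x))).add_const (4 * x)).add
      ((hasDerivAt_id' t).const_mul 3) |>.congr_deriv (by ring)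
  have hD : HasDerivAt
      (fun s => (9 * x * s ^ 4 - 15 * x * s ^ 2 + 4 * x + 3 * s) * Real.exp ((-s ^ 3 + s) * x))
      ((36 * t ^ 3 * x - 30 * t * x + 3) * Real.exp ((-t ^ 3 + t) * x) +
        (9 * x * t ^ 4 - 15 * x * t ^ 2 + 4 * x + 3 * t) *
          (Real.exp ((-t ^ 3 + t) * x) * ((-3 * t ^ 2 + 1) * x))) t :=
    hq.mul (hp.mul_const x).exp
  rw [hrhs, hD.deriv, f17xx_eq, f17x_eq, f17]
  ring
end

section
/- For x > 0, the function v(x) = ∫_0^∞ exp((−t³+t)x) dt satisfies the inhomogeneous ODE −27x² v''(x) − 27x v'(x) + (4x² + 3) v(x) = −4x. -/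
/-!
Write `φ(t) = -t³ + t`. Differentiating under the integral sign gives
`v⁽ⁿ⁾(x) = ∫₀^∞ φⁿ e^{φx} dt`; near `x` the integrands are dominated because `e^{φ(t) y}` is
monotone in `y`, so `e^{φ(t) y} ≤ e^{φ(t) a} + e^{φ(t) b}` on `[a, b]`. The ODE integrand
`(-27x²φ² - 27xφ + 4x² + 3) e^{φx}` is the `t`-derivative of
`(x(9t⁴ - 15t² + 4) + 3t) e^{φx}`, which is `4x` at `t = 0` and decays at `∞`.
-/

/-- `v(x) = ∫₀^∞ exp((−t³+t)x) dt` -/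
noncomputable def v18 (x : ℝ) : ℝ := ∫ t in Set.Ioi (0 : ℝ), Real.exp ((-t ^ 3 + t) * x)

open Real MeasureTheory Set Filter Topology Asymptotics

lemma tendsto_cubic_phase_atTop {x : ℝ} (hx : 0 < x) (b : ℝ) :
    Tendsto (fun t : ℝ => b * t - (-t ^ 3 + t) * x) atTop atTop := by
  have hquad : Tendsto (fun t : ℝ => x * t ^ 2 + (b - x)) atTop atTop :=
    tendsto_atTop_add_const_right _ _ ((tendsto_pow_atTop two_ne_zero).const_mul_atTop hx)
  refine (tendsto_id.atTop_mul_atTop₀ hquad).congr fun t => ?_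
  simp only [id]; ring

lemma isBigO_eval_mul_exp_cubic (p : Polynomial ℝ) {x : ℝ} (hx : 0 < x) :
    (fun t : ℝ => p.eval t * exp ((-t ^ 3 + t) * x)) =O[atTop] fun t => exp (-t) := by
  have hp : (fun t => p.eval t) =O[atTop] exp :=
    (isLittleO_of_tendsto (fun t h => absurd h (exp_ne_zero t)) p.tendsto_div_exp_atTop).isBigO
  have he : (fun t : ℝ => exp ((-t ^ 3 + t) * x)) =O[atTop] fun t => exp (-2 * t) :=
    (isLittleO_exp_comp_exp_comp.2 (tendsto_cubic_phase_atTop hx (-2))).isBigO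
  refine (hp.mul he).congr_right fun t => ?_
  rw [← exp_add]; ring_nf

lemma integrableOn_eval_mul_exp_cubic (p : Polynomial ℝ) {x : ℝ} (hx : 0 < x) :
    IntegrableOn (fun t : ℝ => p.eval t * exp ((-t ^ 3 + t) * x)) (Ioi 0) :=
  integrable_of_isBigO_exp_neg one_pos (by fun_prop)
    (by simpa only [neg_one_mul] using isBigO_eval_mul_exp_cubic p hx)

lemma tendsto_eval_mul_exp_cubic (p : Polynomial ℝ) {x : ℝ} (hx : 0 < x) :
    Tendsto (fun t : ℝ => p.eval t * exp ((-t ^ 3 + t) * x)) atTop (𝓝 0) :=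
  (isBigO_eval_mul_exp_cubic p hx).trans_tendsto
    (tendsto_exp_atBot.comp tendsto_neg_atTop_atBot)

lemma integrableOn_pow_mul_exp_cubic (n : ℕ) {x : ℝ} (hx : 0 < x) :
    IntegrableOn (fun t : ℝ => (-t ^ 3 + t) ^ n * exp ((-t ^ 3 + t) * x)) (Ioi 0) := by
  have h := integrableOn_eval_mul_exp_cubic ((-Polynomial.X ^ 3 + Polynomial.X) ^ n) hx
  simp only [Polynomial.eval_pow, Polynomial.eval_add, Polynomial.eval_neg, Polynomial.eval_X] at h
  exact h

noncomputable def v18Moment (n : ℕ) (y : ℝ) : ℝ :=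
  ∫ t in Ioi (0 : ℝ), (-t ^ 3 + t) ^ n * exp ((-t ^ 3 + t) * y)

lemma v18Moment_zero : v18Moment 0 = v18 := by
  funext y; simp only [v18Moment, v18, pow_zero, one_mul]

lemma exp_mul_le_exp_mul_add_exp_mul {a b y : ℝ} (c : ℝ) (hy : y ∈ Icc a b) :
    exp (c * y) ≤ exp (c * a) + exp (c * b) := by
  rcases le_total 0 c with hc | hc
  · have : exp (c * y) ≤ exp (c * b) := exp_le_exp.2 (mul_le_mul_of_nonneg_left hy.2 hc)
    linarith [exp_pos (c * a)]
  · have : exp (c * y) ≤ exp (c * a) := exp_le_exp.2 (mul_le_mul_of_nonpos_left hy.1 hc)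
    linarith [exp_pos (c * b)]

lemma hasDerivAt_v18Moment (n : ℕ) {x : ℝ} (hx : 0 < x) :
    HasDerivAt (v18Moment n) (v18Moment (n + 1) x) x := by
  set F' : ℝ → ℝ → ℝ := fun y t => (-t ^ 3 + t) ^ (n + 1) * exp ((-t ^ 3 + t) * y)
  have hbound : ∀ t, ∀ y ∈ Icc (x / 2) (3 * x / 2),
      ‖F' y t‖ ≤ ‖F' (x / 2) t‖ + ‖F' (3 * x / 2) t‖ := by
    intro t y hy
    simp only [F', norm_mul, norm_pow, norm_of_nonneg (exp_pos _).le, ← mul_add]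
    gcongr
    exact exp_mul_le_exp_mul_add_exp_mul _ hy
  have hderiv : ∀ t y,
      HasDerivAt (fun y => (-t ^ 3 + t) ^ n * exp ((-t ^ 3 + t) * y)) (F' y t) y :=
    fun t y => (((hasDerivAt_id' y).const_mul (-t ^ 3 + t)).exp.const_mul _).congr_deriv
      (by simp only [F']; ring)
  exact (hasDerivAt_integral_of_dominated_loc_of_deriv_le (μ := volume.restrict (Ioi 0))
    (F := fun y t => (-t ^ 3 + t) ^ n * exp ((-t ^ 3 + t) * y))
    (Ioo_mem_nhds (by linarith) (by linarith))
    (.of_forall fun y => by fun_prop) (integrableOn_pow_mul_exp_cubic n hx) (by fun_prop)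
    (.of_forall fun t y hy => hbound t y (Ioo_subset_Icc_self hy))
    ((integrableOn_pow_mul_exp_cubic _ (by positivity)).norm.add
      (integrableOn_pow_mul_exp_cubic _ (by positivity)).norm)
    (.of_forall fun t y _ => hderiv t y)).2

lemma hasDerivAt_v18_antiderivative (x t : ℝ) :
    HasDerivAt
      (fun t : ℝ => (x * (9 * t ^ 4 - 15 * t ^ 2 + 4) + 3 * t) * exp ((-t ^ 3 + t) * x))
      ((-27 * x ^ 2 * (-t ^ 3 + t) ^ 2 - 27 * x * (-t ^ 3 + t) + (4 * x ^ 2 + 3))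
        * exp ((-t ^ 3 + t) * x)) t := by
  have hpoly := ((((hasDerivAt_pow 4 t).const_mul 9).fun_sub
    ((hasDerivAt_pow 2 t).const_mul 15)).add_const 4).const_mul x
    |>.fun_add ((hasDerivAt_id' t).const_mul 3)
  have hexp := (((hasDerivAt_pow 3 t).fun_neg.fun_add (hasDerivAt_id' t)).mul_const x).exp
  exact (hpoly.fun_mul hexp).congr_deriv (by push_cast; ring)

lemma v18Moment_ode {x : ℝ} (hx : 0 < x) :
    -27 * x ^ 2 * v18Moment 2 x - 27 * x * v18Moment 1 x + (4 * x ^ 2 + 3) * v18Moment 0 x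
      = -4 * x := by
  have hint (n : ℕ) (c : ℝ) := (integrableOn_pow_mul_exp_cubic n hx).const_mul c
  have htend := tendsto_eval_mul_exp_cubic
    (Polynomial.C x * (9 * Polynomial.X ^ 4 - 15 * Polynomial.X ^ 2 + 4) + 3 * Polynomial.X) hx
  simp only [Polynomial.eval_add, Polynomial.eval_mul, Polynomial.eval_sub, Polynomial.eval_C,
    Polynomial.eval_pow, Polynomial.eval_X, Polynomial.eval_ofNat] at htend
  have hlin := ((hint 2 (-27 * x ^ 2)).sub' (hint 1 (27 * x))).fun_add (hint 0 (4 * x ^ 2 + 3))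
  calc _ = ∫ t in Ioi 0, -27 * x ^ 2 * ((-t ^ 3 + t) ^ 2 * exp ((-t ^ 3 + t) * x))
          - 27 * x * ((-t ^ 3 + t) ^ 1 * exp ((-t ^ 3 + t) * x))
          + (4 * x ^ 2 + 3) * ((-t ^ 3 + t) ^ 0 * exp ((-t ^ 3 + t) * x)) := by
        rw [integral_add ((hint 2 _).sub' (hint 1 _)) (hint 0 _),
          integral_sub (hint 2 _) (hint 1 _), integral_const_mul, integral_const_mul,
          integral_const_mul]
        rfl
    _ = ∫ t in Ioi 0, (-27 * x ^ 2 * (-t ^ 3 + t) ^ 2 - 27 * x * (-t ^ 3 + t) + (4 * x ^ 2 + 3))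
          * exp ((-t ^ 3 + t) * x) := integral_congr_ae (.of_forall fun t => by ring)
    _ = 0 - (x * (9 * 0 ^ 4 - 15 * 0 ^ 2 + 4) + 3 * 0) * exp ((-0 ^ 3 + 0) * x) :=
        integral_Ioi_of_hasDerivAt_of_tendsto' (fun t _ => hasDerivAt_v18_antiderivative x t)
          (hlin.congr (.of_forall fun t => by ring)) htend
    _ = -4 * x := by norm_num [mul_comm]

/-- For `x > 0`, `v(x) = ∫₀^∞ exp((−t³+t)x) dt` satisfies
`−27x² v'' − 27x v' + (4x² + 3) v = −4x`. -/
theorem stmt18 (x : ℝ) (hx : 0 < x) :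
    -27 * x ^ 2 * deriv (deriv v18) x - 27 * x * deriv v18 x + (4 * x ^ 2 + 3) * v18 x
      = -4 * x := by
  have hv' : deriv v18 =ᶠ[𝓝 x] v18Moment 1 := by
    filter_upwards [Ioi_mem_nhds hx] with y hy
    rw [← v18Moment_zero, (hasDerivAt_v18Moment 0 hy).deriv]
  rw [hv'.deriv_eq, hv'.eq_of_nhds, (hasDerivAt_v18Moment 1 hx).deriv, ← v18Moment_zero]
  exact v18Moment_ode hx
end
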